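/- (Long-time average in the presence of degeneracy.) Let E be a finite-dimensional complex inner product space, H a self-adjoint operator on E, and (ψ_j)_{j∈J} an orthonormal family of eigenvectors of H with eigenvalues E_j (possibly repeated), where J is finite. Let d̄ := max over real numbers e of #{ j ∈ J : E_j = e } be the maximal degeneracy. Let P be a self-adjoint operator with 0 ≤ P ≤ 1, let φ₀ = ∑_{j∈J} c_j ψ_j be a unit vector, and φ(t) := exp(−itH)φ₀. Then the long-time average (1/τ)∫₀^τ ⟨φ(t), P φ(t)⟩ dt converges as τ → ∞, and its limit satisfies lim_{τ→∞} (1/τ)∫₀^τ ⟨φ(t), P φ(t)⟩ dt ≤ d̄ · ∑_{j∈J} |c_j|² ⟨ψ_j, P ψ_j⟩. -/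

import Mathlib

/-!
Expanding `φ₀` in eigenvectors makes
`⟪φ t, P (φ t)⟫ = ∑_{j,k} ⟪c_j ψ_j, P (c_k ψ_k)⟫ e^{i(E_j - E_k)t}` a trigonometric polynomial,
whose time average converges to the sum of its resonant terms `E_j = E_k`. Positivity of `P` at
`c_j ψ_j - c_k ψ_k` bounds twice the real part of a resonant term by
`|c_j|² ⟪ψ_j, P ψ_j⟫ + |c_k|² ⟪ψ_k, P ψ_k⟫`, and after summing over resonant pairs each diagonal
term occurs at most `d̄` times.
-/

open MeasureTheory Filter
open Topology Finset Complex
open scoped InnerProductSpace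

theorem NormedSpace.exp_apply_of_apply_eq_smul {𝕂 E : Type*} [RCLike 𝕂] [NormedAddCommGroup E]
    [NormedSpace 𝕂 E] [CompleteSpace E] {A : E →L[𝕂] E} {μ : 𝕂} {x : E} (h : A x = μ • x) :
    NormedSpace.exp A x = NormedSpace.exp μ • x := by
  have hpow (n : ℕ) : (A ^ n) x = μ ^ n • x := by
    induction n with
    | zero => simp
    | succ n ih =>
      rw [pow_succ, mul_apply_eq_comp, h, map_smul, ih, smul_smul, pow_succ']
  have hA := (NormedSpace.exp_series_hasSum_exp' (𝕂 := 𝕂) A).mapL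
    (ContinuousLinearMap.apply 𝕂 E x)
  refine hA.unique ?_
  simpa only [ContinuousLinearMap.apply_apply, smul_apply, hpow, smul_smul, smul_eq_mul] using
    (NormedSpace.exp_series_hasSum_exp' (𝕂 := 𝕂) μ).smul_const x

theorem NormedSpace.exp_smul_apply_sum_of_apply_eq_smul {E ι : Type*} [NormedAddCommGroup E]
    [NormedSpace ℂ E] [CompleteSpace E] {H : E →L[ℂ] E} {s : Finset ι} {v : ι → E} {e : ι → ℂ}
    (hv : ∀ i, H (v i) = e i • v i) (z : ℂ) :
    NormedSpace.exp (z • H) (∑ i ∈ s, v i) = ∑ i ∈ s, Complex.exp (z * e i) • v i := by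
  rw [map_sum]
  refine sum_congr rfl fun i _ => ?_
  rw [NormedSpace.exp_apply_of_apply_eq_smul (μ := z * e i), Complex.exp_eq_exp_ℂ]
  rw [smul_apply, hv, smul_smul]

section TimeAverage

variable {F : Type*} [NormedAddCommGroup F] [NormedSpace ℝ F]

noncomputable def timeAverage (f : ℝ → F) (τ : ℝ) : F := (1 / τ) • ∫ t in (0 : ℝ)..τ, f t

theorem timeAverage_finsetSum {ι : Type*} (s : Finset ι) {f : ι → ℝ → F}
    (hf : ∀ i ∈ s, Continuous (f i)) (τ : ℝ) :
    timeAverage (fun t => ∑ i ∈ s, f i t) τ = ∑ i ∈ s, timeAverage (f i) τ := by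
  rw [timeAverage, intervalIntegral.integral_finsetSum fun i hi => (hf i hi).intervalIntegrable _ _,
    smul_sum]
  rfl

theorem timeAverage_const_mul (a : ℂ) (f : ℝ → ℂ) (τ : ℝ) :
    timeAverage (fun t => a * f t) τ = a * timeAverage f τ := by
  rw [timeAverage, timeAverage, intervalIntegral.integral_const_mul, mul_smul_comm]

theorem timeAverage_re {f : ℝ → ℂ} (hf : Continuous f) (τ : ℝ) :
    timeAverage (fun t => (f t).re) τ = (timeAverage f τ).re := by
  have h := intervalIntegral.intervalIntegral_re (hf.intervalIntegrable (μ := volume) 0 τ)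
  simp only [RCLike.re_to_complex] at h
  rw [timeAverage, timeAverage, h, smul_re]

theorem tendsto_timeAverage_exp_mul_I (ω : ℝ) :
    Tendsto (timeAverage fun t => Complex.exp (ω * I * t)) atTop
      (𝓝 (if ω = 0 then 1 else 0)) := by
  by_cases hω : ω = 0
  · subst hω
    refine tendsto_const_nhds.congr' ?_
    filter_upwards [eventually_ne_atTop 0] with τ hτ
    simp [timeAverage, hτ]
  · have hc : (ω * I : ℂ) ≠ 0 := by simp [hω]
    have hbound : ∀ τ : ℝ, ‖∫ t in (0 : ℝ)..τ, Complex.exp (ω * I * t)‖ ≤ 2 / ‖(ω * I : ℂ)‖ := by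
      intro τ
      rw [integral_exp_mul_complex hc, norm_div]
      gcongr
      refine (norm_sub_le _ _).trans ?_
      norm_num [Complex.norm_exp]
    rw [if_neg hω]
    refine (tendsto_inv_atTop_zero.zero_smul_isBoundedUnder_le
      (isBoundedUnder_of ⟨_, fun τ => hbound τ⟩)).congr fun τ => ?_
    rw [timeAverage, one_div]

theorem tendsto_timeAverage_sum_mul_exp {ι : Type*} (s : Finset ι) (a : ι → ℂ) (ω : ι → ℝ) :
    Tendsto (timeAverage fun t => ∑ i ∈ s, a i * Complex.exp (ω i * I * t)) atTop
      (𝓝 (∑ i ∈ s with ω i = 0, a i)) := by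
  have h (i : ι) : Tendsto (timeAverage fun t => a i * Complex.exp (ω i * I * t)) atTop
      (𝓝 (if ω i = 0 then a i else 0)) := by
    have h := (tendsto_timeAverage_exp_mul_I (ω i)).const_mul (a i)
    rw [mul_ite, mul_one, mul_zero] at h
    exact h.congr fun τ => (timeAverage_const_mul _ _ τ).symm
  rw [sum_filter]
  refine (tendsto_finsetSum s fun i _ => h i).congr fun τ => ?_
  rw [timeAverage_finsetSum s fun i _ => by fun_prop]

end TimeAverage

theorem ContinuousLinearMap.IsPositive.two_mul_re_inner_le {𝕜 E : Type*} [RCLike 𝕜]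
    [NormedAddCommGroup E] [InnerProductSpace 𝕜 E] {T : E →L[𝕜] E} (hT : T.IsPositive)
    (x y : E) : 2 * RCLike.re ⟪x, T y⟫_𝕜 ≤ RCLike.re ⟪x, T x⟫_𝕜 + RCLike.re ⟪y, T y⟫_𝕜 := by
  have hxy : RCLike.re ⟪y, T x⟫_𝕜 = RCLike.re ⟪x, T y⟫_𝕜 := by
    rw [← hT.inner_left_eq_inner_right, inner_re_symm]
  have h := hT.re_inner_nonneg_right (x - y)
  simp only [map_sub, inner_sub_left, inner_sub_right] at h
  linarith

theorem sum_filter_apply_eq_apply_le_mul_sum {J β : Type*} [Fintype J] [DecidableEq β] (f : J → β)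
    {d : ℕ} (hd : ∀ j, #{j' | f j' = f j} ≤ d) {w : J → ℝ} (hw : ∀ j, 0 ≤ w j) {b : J × J → ℝ}
    (hb : ∀ j k, f j = f k → 2 * b (j, k) ≤ w j + w k) :
    ∑ p : J × J with f p.1 = f p.2, b p ≤ d * ∑ j, w j := by
  have hswap : ∑ p : J × J with f p.1 = f p.2, w p.1 = ∑ p : J × J with f p.1 = f p.2, w p.2 :=
    sum_equiv (Equiv.prodComm J J) (by simp [eq_comm]) (by simp)
  have hfiber : ∑ p : J × J with f p.1 = f p.2, w p.2 = ∑ k, #{j | f j = f k} * w k := by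
    rw [sum_filter, Fintype.sum_prod_type, sum_comm]
    refine sum_congr rfl fun k _ => ?_
    rw [← sum_filter]
    simp only [sum_const, nsmul_eq_mul]
  have h2 : 2 * ∑ p : J × J with f p.1 = f p.2, b p ≤ 2 * ∑ k, #{j | f j = f k} * w k := by
    calc 2 * ∑ p : J × J with f p.1 = f p.2, b p
        ≤ ∑ p : J × J with f p.1 = f p.2, (w p.1 + w p.2) := by
          rw [mul_sum]
          exact sum_le_sum fun p hp => hb p.1 p.2 (mem_filter.1 hp).2
      _ = 2 * ∑ k, #{j | f j = f k} * w k := by rw [sum_add_distrib, hswap, hfiber]; ring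
  calc ∑ p : J × J with f p.1 = f p.2, b p ≤ ∑ k, #{j | f j = f k} * w k := by linarith
    _ ≤ ∑ k, d * w k := sum_le_sum fun k _ => by gcongr; exacts [hw k, hd k]
    _ = d * ∑ j, w j := (mul_sum ..).symm

theorem inner_sum_exp_smul_map_sum_exp_smul {E J : Type*} [NormedAddCommGroup E]
    [InnerProductSpace ℂ E] [Fintype J] (T : E →L[ℂ] E) (v : J → E) (ω : J → ℝ) (t : ℝ) :
    ⟪∑ j, Complex.exp (-I * t * ω j) • v j, T (∑ j, Complex.exp (-I * t * ω j) • v j)⟫_ℂ =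
      ∑ p : J × J, ⟪v p.1, T (v p.2)⟫_ℂ * Complex.exp ((ω p.1 - ω p.2 : ℝ) * I * t) := by
  rw [sum_inner, Fintype.sum_prod_type]
  refine sum_congr rfl fun j _ => ?_
  rw [map_sum, inner_sum]
  refine sum_congr rfl fun k _ => ?_
  simp only [map_smul, inner_smul_left, inner_smul_right, ← Complex.exp_conj, map_mul, map_neg,
    conj_I, conj_ofReal]
  rw [mul_left_comm, ← mul_assoc, ← Complex.exp_add, mul_comm]
  push_cast
  ring_nf

theorem long_time_average_degenerate_general
    {E : Type*} [NormedAddCommGroup E] [InnerProductSpace ℂ E] [FiniteDimensional ℂ E]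
    (H : E →L[ℂ] E)
    {J : Type*} [Fintype J]
    (ψ : J → E)
    (Ej : J → ℝ) (heig : ∀ j, H (ψ j) = (Ej j : ℂ) • ψ j)
    (d : ℕ)
    (hd : d = Finset.univ.sup fun j : J =>
      (Finset.univ.filter fun j' : J => Ej j' = Ej j).card)
    (P : E →L[ℂ] E) (hP : IsSelfAdjoint P)
    (hP0 : ∀ x : E, 0 ≤ (inner ℂ x (P x) : ℂ).re)
    (c : J → ℂ) (φ0 : E) (hφ0 : φ0 = ∑ j, c j • ψ j)
    (φ : ℝ → E) (hφ : ∀ t : ℝ, φ t = NormedSpace.exp (((-Complex.I) * (t : ℂ)) • H) φ0) :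
    ∃ ℓ : ℝ,
      Tendsto (fun τ : ℝ => (1 / τ) * ∫ t in (0:ℝ)..τ, (inner ℂ (φ t) (P (φ t)) : ℂ).re)
        atTop (nhds ℓ) ∧
      ℓ ≤ (d : ℝ) * ∑ j, ‖c j‖ ^ 2 * (inner ℂ (ψ j) (P (ψ j)) : ℂ).re := by
  set v : J → E := fun j => c j • ψ j
  set a : J × J → ℂ := fun p => ⟪v p.1, P (v p.2)⟫_ℂ
  have hinner (t : ℝ) :
      ⟪φ t, P (φ t)⟫_ℂ = ∑ p, a p * Complex.exp ((Ej p.1 - Ej p.2 : ℝ) * I * t) := by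
    have hv (j : J) : H (v j) = (Ej j : ℂ) • v j := by
      rw [map_smul, heig, smul_comm]
    rw [hφ, hφ0, NormedSpace.exp_smul_apply_sum_of_apply_eq_smul hv,
      inner_sum_exp_smul_map_sum_exp_smul]
  have hPpos : P.IsPositive :=
    ContinuousLinearMap.isPositive_def'.2 ⟨hP, fun x => by
      rw [ContinuousLinearMap.reApplyInnerSelf_apply, inner_re_symm]; exact hP0 x⟩
  refine ⟨(∑ p : J × J with Ej p.1 = Ej p.2, a p).re, ?_, ?_⟩
  · have h := Complex.continuous_re.tendsto _ |>.comp <|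
      tendsto_timeAverage_sum_mul_exp univ a fun p => Ej p.1 - Ej p.2
    simp only [sub_eq_zero] at h
    refine h.congr fun τ => ?_
    rw [Function.comp_apply, ← timeAverage_re (by fun_prop)]
    simp only [timeAverage, hinner, smul_eq_mul]
  · rw [Complex.re_sum]
    refine (sum_filter_apply_eq_apply_le_mul_sum Ej (d := d) (fun j => ?_) (fun j => hP0 (v j))
      fun j k _ => hPpos.two_mul_re_inner_le (v j) (v k)).trans_eq ?_
    · exact hd ▸ le_sup (f := fun j => #{j' | Ej j' = Ej j}) (mem_univ j)
    · simp only [v, map_smul, inner_smul_left, inner_smul_right, ← mul_assoc, mul_conj',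
        ← ofReal_pow, re_ofReal_mul]

/-- **Long-time average in the presence of degeneracy.**  For the evolution
`φ(t) = exp(−itH)φ₀` of `φ₀ = ∑_j c_j ψ_j`, where `(ψ_j)` is an orthonormal family of
eigenvectors of `H` with (possibly repeated) eigenvalues `E_j` of maximal degeneracy `d̄`,
and `P` satisfies `0 ≤ P ≤ 1`, the long-time average of `⟪φ(t), P φ(t)⟫` converges, and its
limit is at most `d̄·∑_j |c_j|² ⟪ψ_j, P ψ_j⟫`. -/
theorem long_time_average_degenerate
    {E : Type*} [NormedAddCommGroup E] [InnerProductSpace ℂ E] [FiniteDimensional ℂ E]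
    (H : E →L[ℂ] E) (hH : IsSelfAdjoint H)
    {J : Type*} [Fintype J]
    (ψ : J → E) (hψ : Orthonormal ℂ ψ)
    (Ej : J → ℝ) (heig : ∀ j, H (ψ j) = (Ej j : ℂ) • ψ j)
    (d : ℕ)
    (hd : d = Finset.univ.sup fun j : J =>
      (Finset.univ.filter fun j' : J => Ej j' = Ej j).card)
    (P : E →L[ℂ] E) (hP : IsSelfAdjoint P)
    (hP0 : ∀ x : E, 0 ≤ (inner ℂ x (P x) : ℂ).re)
    (hP1 : ∀ x : E, (inner ℂ x (P x) : ℂ).re ≤ ‖x‖ ^ 2)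
    (c : J → ℂ) (φ0 : E) (hφ0 : φ0 = ∑ j, c j • ψ j) (hφ0norm : ‖φ0‖ = 1)
    (φ : ℝ → E) (hφ : ∀ t : ℝ, φ t = NormedSpace.exp (((-Complex.I) * (t : ℂ)) • H) φ0) :
    ∃ ℓ : ℝ,
      Tendsto (fun τ : ℝ => (1 / τ) * ∫ t in (0:ℝ)..τ, (inner ℂ (φ t) (P (φ t)) : ℂ).re)
        atTop (nhds ℓ) ∧
      ℓ ≤ (d : ℝ) * ∑ j, ‖c j‖ ^ 2 * (inner ℂ (ψ j) (P (ψ j)) : ℂ).re :=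
  long_time_average_degenerate_general H ψ Ej heig d hd P hP hP0 c φ0 hφ0 φ hφ
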